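/- arXiv:2201.11539 — 2 statements merged into one kernel-verified Lean document; each statement's English description precedes it below -/
import Mathlib

section
/- Let (Ω, P) be a finite probability space and let d : Ω → [N], Q1 : Ω → [N1], Q2 : Ω → [N2] be random variables such that: d is uniformly distributed on [N]; d and Q1 are independent; Q1 and Q2 are independent; Q2 is uniformly distributed on [N2]; P(Q1 = q1) > 0 for every q1 ∈ [N1]; and for every τ ∈ [N] and every q1 ∈ [N1] the events {d = τ} ∩ {Q1 = q1} and {Q2 ∈ U_{τ|q1}} ∩ {Q1 = q1} coincide. Then the cardinality |U_{τ|q1}| does not depend on q1 nor on τ; in fact N · |U_{τ|q1}| = N2 for every τ ∈ [N] and q1 ∈ [N1]. (Part 1 of the converse theorem: under uniform demand, demand privacy, independent queries, and uniform query distributions, all fibers of the recovery sets have the same size.) -/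
open Classical in
/-- Probability of the event `E` on a finite probability space with weight
function `p`. -/
noncomputable def pr {Ω : Type*} [Fintype Ω] (p : Ω → ℝ) (E : Ω → Prop) : ℝ :=
  ∑ ω, if E ω then p ω else 0

/-!
Splitting `{Q2 ∈ U_{τ|q1}, Q1 = q1}` over the values of `Q2` and applying the two
independence assumptions, the event identity `{d = τ, Q1 = q1} = {Q2 ∈ U_{τ|q1}, Q1 = q1}`
becomes
`P(Q1 = q1) / N = |U_{τ|q1}| · P(Q1 = q1) / N2`, and `P(Q1 = q1) > 0` can be cancelled.
-/

theorem pr_congr {Ω : Type*} [Fintype Ω] (p : Ω → ℝ) {E F : Ω → Prop}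
    (h : ∀ ω, E ω ↔ F ω) : pr p E = pr p F :=
  congrArg (pr p) (funext fun ω => propext (h ω))

theorem pr_mem_and_eq_sum {Ω α : Type*} [Fintype Ω] (p : Ω → ℝ)
    (X : Ω → α) (s : Finset α) (E : Ω → Prop) :
    pr p (fun ω => X ω ∈ s ∧ E ω) = ∑ x ∈ s, pr p (fun ω => E ω ∧ X ω = x) := by
  classical
  unfold pr
  rw [Finset.sum_comm]
  refine Finset.sum_congr rfl fun ω _ => ?_
  by_cases hE : E ω
  · simp only [hE, true_and, and_true]
    rw [Finset.sum_ite_eq]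
  · simp [hE]

theorem Nat.mul_eq_of_one_div_eq_div {a b c : ℕ} (ha : a ≠ 0)
    (h : 1 / (a : ℝ) = b / c) : a * b = c := by
  have hc : (c : ℝ) ≠ 0 := by
    rintro hc
    rw [hc, div_zero, one_div, inv_eq_zero] at h
    exact ha (by exact_mod_cast h)
  have ha' : (a : ℝ) ≠ 0 := by exact_mod_cast ha
  field_simp at h
  exact_mod_cast h.symm

theorem pir_converse_part1_general
    {Ω : Type*} [Fintype Ω] (p : Ω → ℝ)
    (N N1 N2 : ℕ)
    (d : Ω → Fin N) (Q1 : Ω → Fin N1) (Q2 : Ω → Fin N2)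
    (U : Fin N → Fin N1 → Finset (Fin N2))
    (hdunif : ∀ τ : Fin N, pr p (fun ω => d ω = τ) = 1 / (N : ℝ))
    (hdQ1 : ∀ (τ : Fin N) (q1 : Fin N1),
      pr p (fun ω => d ω = τ ∧ Q1 ω = q1)
        = pr p (fun ω => d ω = τ) * pr p (fun ω => Q1 ω = q1))
    (hQ1Q2 : ∀ (q1 : Fin N1) (q2 : Fin N2),
      pr p (fun ω => Q1 ω = q1 ∧ Q2 ω = q2)
        = pr p (fun ω => Q1 ω = q1) * pr p (fun ω => Q2 ω = q2))
    (hQ2unif : ∀ q2 : Fin N2, pr p (fun ω => Q2 ω = q2) = 1 / (N2 : ℝ))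
    (hQ1pos : ∀ q1 : Fin N1, 0 < pr p (fun ω => Q1 ω = q1))
    (hevent : ∀ (τ : Fin N) (q1 : Fin N1) (ω : Ω),
      (d ω = τ ∧ Q1 ω = q1) ↔ (Q2 ω ∈ U τ q1 ∧ Q1 ω = q1)) :
    ∀ (τ : Fin N) (q1 : Fin N1), N * (U τ q1).card = N2 := by
  intro τ q1
  set P := pr p (fun ω => Q1 ω = q1)
  have key : P * (1 / N) = P * ((U τ q1).card / N2) :=
    calc P * (1 / N) = pr p (fun ω => d ω = τ ∧ Q1 ω = q1) := by rw [hdQ1, hdunif, mul_comm]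
      _ = pr p (fun ω => Q2 ω ∈ U τ q1 ∧ Q1 ω = q1) := pr_congr p (hevent τ q1)
      _ = ∑ q2 ∈ U τ q1, P * (1 / N2) := by
        rw [pr_mem_and_eq_sum]
        exact Finset.sum_congr rfl fun q2 _ => by rw [hQ1Q2, hQ2unif]
      _ = P * ((U τ q1).card / N2) := by rw [Finset.sum_const, nsmul_eq_mul]; ring
  exact Nat.mul_eq_of_one_div_eq_div (Fin.pos τ).ne' (mul_left_cancel₀ (hQ1pos q1).ne' key)

/-- **Part 1 of the converse theorem.** In a two-server PIR scheme where the
demand `d` is uniform on `Fin N`, the demand is independent of the query `Q1`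
to server 1, the two queries `Q1, Q2` are independent, the query `Q2` to
server 2 is uniform on `Fin N2`, every query to server 1 has positive
probability, and for every file index `τ` and query `q1` the event
`{d = τ, Q1 = q1}` coincides with `{Q2 ∈ U_{τ|q1}, Q1 = q1}`, the fiber
cardinalities `|U_{τ|q1}|` do not depend on `τ` nor on `q1`: in fact
`N * |U_{τ|q1}| = N2` always. -/
theorem pir_converse_part1
    {Ω : Type*} [Fintype Ω] (p : Ω → ℝ)
    (hp : ∀ ω, 0 ≤ p ω) (hp1 : ∑ ω, p ω = 1)
    (N N1 N2 : ℕ) (hN : 0 < N) (hN1 : 0 < N1) (hN2 : 0 < N2)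
    (d : Ω → Fin N) (Q1 : Ω → Fin N1) (Q2 : Ω → Fin N2)
    (U : Fin N → Fin N1 → Finset (Fin N2))
    (hdunif : ∀ τ : Fin N, pr p (fun ω => d ω = τ) = 1 / (N : ℝ))
    (hdQ1 : ∀ (τ : Fin N) (q1 : Fin N1),
      pr p (fun ω => d ω = τ ∧ Q1 ω = q1)
        = pr p (fun ω => d ω = τ) * pr p (fun ω => Q1 ω = q1))
    (hQ1Q2 : ∀ (q1 : Fin N1) (q2 : Fin N2),
      pr p (fun ω => Q1 ω = q1 ∧ Q2 ω = q2)
        = pr p (fun ω => Q1 ω = q1) * pr p (fun ω => Q2 ω = q2))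
    (hQ2unif : ∀ q2 : Fin N2, pr p (fun ω => Q2 ω = q2) = 1 / (N2 : ℝ))
    (hQ1pos : ∀ q1 : Fin N1, 0 < pr p (fun ω => Q1 ω = q1))
    (hevent : ∀ (τ : Fin N) (q1 : Fin N1) (ω : Ω),
      (d ω = τ ∧ Q1 ω = q1) ↔ (Q2 ω ∈ U τ q1 ∧ Q1 ω = q1)) :
    ∀ (τ : Fin N) (q1 : Fin N1), N * (U τ q1).card = N2 :=
  pir_converse_part1_general p N N1 N2 d Q1 Q2 U hdunif hdQ1 hQ1Q2 hQ2unif hQ1pos hevent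
end

section
/- Let G be an abelian group. Define the server-1 answer a1 : Fin 2 → G² → G by a1(0, w) = 0 and a1(1, w) = w1 + w2, and the server-2 answer-index map q2 : Fin 2 × Fin 2 → Fin 2 by q2(0, ·) = (1, 2) and q2(1, ·) = (2, 1) (server 2 returns a2(T, d, w) = w_{q2(T,d)}). Then: (i) there exists a decoding map dec : Fin 2 → Fin 2 → G → G → G such that dec T d (a1(T, w)) (w_{q2(T,d)}) = w_d for every T, d ∈ Fin 2 and every w = (w1, w2) ∈ G²; and (ii) q2 is a Latin square: for each fixed T the map d ↦ q2(T, d) is a bijection of Fin 2, and for each fixed d the map T ↦ q2(T, d) is a bijection of Fin 2. (This is the decodability and query structure of the two-server PIR scheme for N = 2 satisfying the UDIQ condition, with download cost pair (1/2, 1) — server 1 sends nothing when T = 0 — and subpacketization 1.) -/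
/-- Server 1's answer in the two-server PIR scheme for `N = 2` from
Tian–Sun–Liu: nothing (i.e. `0`) when `T = 0` and `w₁ + w₂` when `T = 1`. -/
def pir2Answer1 {G : Type*} [AddCommGroup G] (T : Fin 2) (w : Fin 2 → G) : G :=
  ![0, w 0 + w 1] T

/-- Server 2's answer-index map in the two-server PIR scheme for `N = 2`
(0-based): `q2(0,·) = (w₁,w₂)`, `q2(1,·) = (w₂,w₁)`; server 2 returns
`w (pir2Query2 T d)`. -/
def pir2Query2 : Fin 2 → Fin 2 → Fin 2 :=
  ![![0, 1], ![1, 0]]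

/-- **Decodability and Latin-square query structure of the two-server PIR
scheme for `N = 2`** (satisfying the UDIQ condition, with download cost pair
`(1/2, 1)` — server 1 sends nothing when `T = 0` — and subpacketization `1`):
there is a decoding map recovering the demanded file `w d` from the two
answers, and the answer-index map of server 2 is a Latin square in `(T, d)`. -/
theorem pir2_decodable_and_latin (G : Type*) [AddCommGroup G] :
    (∃ dec : Fin 2 → Fin 2 → G → G → G,
      ∀ (T d : Fin 2) (w : Fin 2 → G),
        dec T d (pir2Answer1 T w) (w (pir2Query2 T d)) = w d) ∧
    (∀ T : Fin 2, Function.Bijective (fun d => pir2Query2 T d)) ∧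
    (∀ d : Fin 2, Function.Bijective (fun T => pir2Query2 T d)) := by
  refine ⟨⟨fun T _ a b => ![b, a - b] T, ?_⟩, ?_, ?_⟩
  · intro T d w
    fin_cases T <;> fin_cases d <;>
      simp [pir2Answer1, pir2Query2]
  · intro T; revert T; decide
  · intro d; revert d; decide
end
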